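/- Let S ≻ 0, W ≻ 0 be n×n real symmetric matrices and T ≥ 1 such that β_T · S⁻¹WS⁻¹ ⪯ I where β_T = ∑_{t=1}^T 1/t². Then the minimum over all sequences X₁,…,X_T of positive semidefinite matrices of J_T = ∑_{t=1}^T [tr(W X̄_t⁻¹) + tr(X_t)], with X̄_t = ∑_{k=1}^t X_k + tS, is attained at X_t = 0 for all t, with optimal value α_T · tr(WS⁻¹), where α_T = ∑_{t=1}^T 1/t. -/

import Mathlib

open Matrix BigOperators Finset Real

/-!
Weak duality. For `M ≻ 0`, `W ⪰ 0` and any scalar `c`, expanding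
`0 ≤ tr (W (M⁻¹ - c S⁻¹) M (M⁻¹ - c S⁻¹))` gives
`tr (W M⁻¹) ≥ 2c tr (W S⁻¹) - c² tr (M S⁻¹ W S⁻¹)`. Taking `M = X̄_t` and `c = 1/t` bounds the
`t`-th cost term by `(1/t) tr (W S⁻¹) - (1/t²) ∑_{k ≤ t} tr (X_k S⁻¹ W S⁻¹)`. Summed over `t`,
the error terms total at most `β_T ∑_k tr (X_k S⁻¹ W S⁻¹) ≤ ∑_k tr X_k`, because
`β_T S⁻¹ W S⁻¹ ⪯ I`, so every sequence costs at least `α_T tr (W S⁻¹)`, which `X = 0` attains.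
-/

namespace Matrix

variable {m 𝕜 : Type*} [Fintype m] [RCLike 𝕜]

open scoped ComplexOrder

open scoped MatrixOrder in
theorem PosSemidef.trace_mul_nonneg {A B : Matrix m m 𝕜} (hA : A.PosSemidef)
    (hB : B.PosSemidef) : 0 ≤ (A * B).trace := by
  classical
  obtain ⟨C, rfl⟩ := CStarAlgebra.nonneg_iff_eq_star_mul_self.mp hA.nonneg
  rw [star_eq_conjTranspose, Matrix.mul_assoc, trace_mul_comm]
  exact (hB.mul_mul_conjTranspose_same C).trace_nonneg

variable [DecidableEq m]

theorem PosSemidef.trace_mul_le_trace {X P : Matrix m m 𝕜} (hX : X.PosSemidef)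
    (hP : (1 - P).PosSemidef) : (X * P).trace ≤ X.trace := by
  have := hX.trace_mul_nonneg hP
  rwa [Matrix.mul_sub, Matrix.mul_one, trace_sub, sub_nonneg] at this

theorem PosDef.two_mul_trace_sub_le_trace_mul_inv {M S W : Matrix m m ℝ} (hM : M.PosDef)
    (hS : S.IsHermitian) (hW : W.PosSemidef) (c : ℝ) :
    2 * c * (W * S⁻¹).trace - c ^ 2 * (M * (S⁻¹ * W * S⁻¹)).trace ≤ (W * M⁻¹).trace := by
  set D := M⁻¹ - c • S⁻¹
  have hD : Dᴴ = D := (hM.inv.isHermitian.sub (hS.inv.smul (IsSelfAdjoint.all c))).eq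
  have hMdet : IsUnit M.det := hM.det_pos.ne'.isUnit
  have hMM : M * M⁻¹ = 1 := M.mul_nonsing_inv hMdet
  have hDMD : D * M * D = M⁻¹ - (2 * c) • S⁻¹ + c ^ 2 • (S⁻¹ * M * S⁻¹) := by
    simp only [D, Matrix.sub_mul, Matrix.mul_sub, Matrix.smul_mul, Matrix.mul_smul,
      M.nonsing_inv_mul hMdet, Matrix.mul_assoc, hMM, Matrix.one_mul, Matrix.mul_one]
    module
  have key := hW.trace_mul_nonneg (hD ▸ hM.posSemidef.conjTranspose_mul_mul_same D)
  rw [hDMD] at key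
  simp only [Matrix.mul_add, Matrix.mul_sub, Matrix.mul_smul, trace_add, trace_sub, trace_smul,
    smul_eq_mul] at key
  have hcycle : (W * (S⁻¹ * M * S⁻¹)).trace = (M * (S⁻¹ * W * S⁻¹)).trace := by
    simp only [← Matrix.mul_assoc]
    rw [Matrix.mul_assoc (W * S⁻¹) M, trace_mul_comm, ← Matrix.mul_assoc]
  rw [hcycle] at key
  linarith

theorem trace_mul_inv_smul {A S : Matrix m m ℝ} (hS : IsUnit S.det) {c : ℝ} (hc : c ≠ 0) :
    (A * (c • S)⁻¹).trace = 1 / c * (A * S⁻¹).trace := by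
  let := invertibleOfNonzero hc
  rw [inv_smul S c hS, invOf_eq_inv, Matrix.mul_smul, trace_smul, smul_eq_mul, one_div]

theorem PosSemidef.le_trace_mul_inv_add_smul {Y S W : Matrix m m ℝ} (hY : Y.PosSemidef)
    (hS : S.PosDef) (hW : W.PosSemidef) {t : ℝ} (ht : 0 < t) :
    1 / t * (W * S⁻¹).trace - 1 / t ^ 2 * (Y * (S⁻¹ * W * S⁻¹)).trace
      ≤ (W * (Y + t • S)⁻¹).trace := by
  have hSP : (S * (S⁻¹ * W * S⁻¹)).trace = (W * S⁻¹).trace := by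
    rw [← Matrix.mul_assoc, ← Matrix.mul_assoc, S.mul_nonsing_inv hS.det_pos.ne'.isUnit,
      Matrix.one_mul]
  have key := (PosDef.posSemidef_add hY (hS.smul ht)).two_mul_trace_sub_le_trace_mul_inv
    hS.isHermitian hW (1 / t)
  rw [Matrix.add_mul, trace_add, Matrix.smul_mul, trace_smul, hSP, smul_eq_mul] at key
  have ht' : t ≠ 0 := ht.ne'
  convert key using 1
  field_simp
  ring

end Matrix

theorem Finset.sum_mul_sum_Icc_le {w a : ℕ → ℝ} {b T : ℕ} (hw : ∀ t ∈ Icc b T, 0 ≤ w t)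
    (ha : ∀ k ∈ Icc b T, 0 ≤ a k) :
    ∑ t ∈ Icc b T, w t * ∑ k ∈ Icc b t, a k ≤ (∑ t ∈ Icc b T, w t) * ∑ k ∈ Icc b T, a k := by
  rw [Finset.sum_mul]
  refine Finset.sum_le_sum fun t ht => mul_le_mul_of_nonneg_left ?_ (hw t ht)
  exact Finset.sum_le_sum_of_subset_of_nonneg (Icc_subset_Icc_right (mem_Icc.mp ht).2)
    fun k hk _ => ha k hk

theorem stmt_12_general (n T : ℕ)
    (S W : Matrix (Fin n) (Fin n) ℝ) (hS : S.PosDef) (hW : W.PosDef)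
    (hfeas : ((1 : Matrix (Fin n) (Fin n) ℝ)
        - (∑ t ∈ Finset.Icc 1 T, (1:ℝ)/(t:ℝ)^2) • (S⁻¹ * W * S⁻¹)).PosSemidef) :
    IsLeast {J : ℝ | ∃ X : ℕ → Matrix (Fin n) (Fin n) ℝ,
        (∀ t ∈ Finset.Icc 1 T, (X t).PosSemidef) ∧
        J = ∑ t ∈ Finset.Icc 1 T,
          ((W * ((∑ k ∈ Finset.Icc 1 t, X k) + (t:ℝ) • S)⁻¹).trace + (X t).trace)}
      ((∑ t ∈ Finset.Icc 1 T, (1:ℝ)/(t:ℝ)) * (W * S⁻¹).trace)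
    ∧ (∑ t ∈ Finset.Icc 1 T,
        ((W * ((t:ℝ) • S)⁻¹).trace + (0 : Matrix (Fin n) (Fin n) ℝ).trace))
      = (∑ t ∈ Finset.Icc 1 T, (1:ℝ)/(t:ℝ)) * (W * S⁻¹).trace := by
  have hpos : ∀ t ∈ Icc 1 T, (0 : ℝ) < t := fun t ht => by
    exact_mod_cast (mem_Icc.mp ht).1
  have hvalue : ∑ t ∈ Icc 1 T, ((W * ((t:ℝ) • S)⁻¹).trace + (0 : Matrix (Fin n) (Fin n) ℝ).trace)
      = (∑ t ∈ Icc 1 T, (1:ℝ)/(t:ℝ)) * (W * S⁻¹).trace := by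
    rw [sum_mul]
    refine sum_congr rfl fun t ht => ?_
    rw [trace_zero, add_zero, trace_mul_inv_smul hS.det_pos.ne'.isUnit (hpos t ht).ne']
  refine ⟨⟨⟨fun _ => 0, fun _ _ => .zero, ?_⟩, ?_⟩, hvalue⟩
  · rw [← hvalue]
    simp
  rintro J ⟨X, hX, rfl⟩
  have hP : (S⁻¹ * W * S⁻¹).PosSemidef := by
    simpa only [hS.inv.isHermitian.eq] using hW.posSemidef.conjTranspose_mul_mul_same S⁻¹
  have hstep : ∀ t ∈ Icc 1 T, 1 / (t:ℝ) * (W * S⁻¹).trace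
      - 1 / (t:ℝ) ^ 2 * ∑ k ∈ Icc 1 t, (X k * (S⁻¹ * W * S⁻¹)).trace
        ≤ (W * ((∑ k ∈ Icc 1 t, X k) + (t:ℝ) • S)⁻¹).trace := by
    intro t ht
    have hXt : (∑ k ∈ Icc 1 t, X k).PosSemidef := posSemidef_sum _ fun k hk =>
      hX k (Icc_subset_Icc_right (mem_Icc.mp ht).2 hk)
    simpa only [Matrix.sum_mul, trace_sum] using
      hXt.le_trace_mul_inv_add_smul hS hW.posSemidef (hpos t ht)
  have hcumul := sum_mul_sum_Icc_le (w := fun t => 1 / (t:ℝ) ^ 2)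
    (fun t _ => by positivity) fun k hk => (hX k hk).trace_mul_nonneg hP
  have hfeas_trace : (∑ t ∈ Icc 1 T, (1:ℝ)/(t:ℝ)^2) * ∑ k ∈ Icc 1 T, (X k * (S⁻¹ * W * S⁻¹)).trace
      ≤ ∑ k ∈ Icc 1 T, (X k).trace := by
    rw [mul_sum]
    refine sum_le_sum fun k hk => ?_
    simpa only [Matrix.mul_smul, trace_smul, smul_eq_mul] using
      (hX k hk).trace_mul_le_trace hfeas
  have hsum := sum_le_sum hstep
  rw [sum_sub_distrib, ← sum_mul] at hsum
  rw [sum_add_distrib]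
  linarith

theorem stmt_12 (n T : ℕ) (hT : 1 ≤ T)
    (S W : Matrix (Fin n) (Fin n) ℝ) (hS : S.PosDef) (hW : W.PosDef)
    (hfeas : ((1 : Matrix (Fin n) (Fin n) ℝ)
        - (∑ t ∈ Finset.Icc 1 T, (1:ℝ)/(t:ℝ)^2) • (S⁻¹ * W * S⁻¹)).PosSemidef) :
    IsLeast {J : ℝ | ∃ X : ℕ → Matrix (Fin n) (Fin n) ℝ,
        (∀ t ∈ Finset.Icc 1 T, (X t).PosSemidef) ∧
        J = ∑ t ∈ Finset.Icc 1 T,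
          ((W * ((∑ k ∈ Finset.Icc 1 t, X k) + (t:ℝ) • S)⁻¹).trace + (X t).trace)}
      ((∑ t ∈ Finset.Icc 1 T, (1:ℝ)/(t:ℝ)) * (W * S⁻¹).trace)
    ∧ (∑ t ∈ Finset.Icc 1 T,
        ((W * ((t:ℝ) • S)⁻¹).trace + (0 : Matrix (Fin n) (Fin n) ℝ).trace))
      = (∑ t ∈ Finset.Icc 1 T, (1:ℝ)/(t:ℝ)) * (W * S⁻¹).trace :=
  stmt_12_general n T S W hS hW hfeas
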